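/- Assume u(x) = Q(y(x)) x where Q is an SO(n)-valued matrix field of class C² depending only on the 2-plane radial variables y = (y_1,…,y_N). Then u is twice differentiable and: (i) Δu = Σ_{ℓ=1}^N [∂²_ℓQ x + Δy_ℓ ∂_ℓQ x + 2∂_ℓQ ∇y_ℓ]; (ii) [∇u]ᵗΔu = Σ_{ℓ=1}^N [Qᵗ∂²_ℓQ x + Δy_ℓ Qᵗ∂_ℓQ x + 2Qᵗ∂_ℓQ ∇y_ℓ] + Σ_{ℓ=1}^N Σ_{k=1}^N [⟨∂_ℓQ x, ∂²_kQ x⟩ + Δy_k ⟨∂_ℓQ x, ∂_kQ x⟩ + 2⟨∂_ℓQ x, ∂_kQ ∇y_k⟩] ∇y_ℓ; (iii) ∇(|∇u|²) = 2 Σ_{ℓ=1}^N [∂_ℓQᵗ Q ∇y_ℓ + ∇²y_ℓ Qᵗ∂_ℓQ x + ∂_ℓQᵗ∂_ℓQ x] + Σ_{ℓ=1}^N Σ_{k=1}^N 2[⟨(∂_kQᵗ∂_ℓQ + Qᵗ∂²_{ℓk}Q)x, ∇y_ℓ⟩ + ⟨∂²_{ℓk}Q x, ∂_ℓQ x⟩]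 ∇y_k. -/

import Mathlib

open scoped BigOperators
open Matrix

noncomputable section

/-- Partial derivative `∂g/∂x_j` of a scalar field on `ℝᵐ`. -/
def pdx {m : ℕ} (g : (Fin m → ℝ) → ℝ) (x : Fin m → ℝ) (j : Fin m) : ℝ :=
  fderiv ℝ g x (Pi.single j 1)

/-- Gradient of a scalar field on `ℝᵐ`. -/
def gradx {m : ℕ} (g : (Fin m → ℝ) → ℝ) (x : Fin m → ℝ) : Fin m → ℝ :=
  fun j => pdx g x j

/-- Gradient matrix `∇u`, with entries `(∇u)_{ij} = ∂u_i/∂x_j`. -/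
def gradm {n : ℕ} (u : (Fin n → ℝ) → Fin n → ℝ) (x : Fin n → ℝ) :
    Matrix (Fin n) (Fin n) ℝ :=
  Matrix.of fun i j => pdx (fun z => u z i) x j

/-- Laplacian of a scalar field. -/
def lapx {m : ℕ} (g : (Fin m → ℝ) → ℝ) (x : Fin m → ℝ) : ℝ :=
  ∑ j, pdx (fun z => pdx g z j) x j

/-- Hessian matrix of a scalar field. -/
def hessx {m : ℕ} (g : (Fin m → ℝ) → ℝ) (x : Fin m → ℝ) : Matrix (Fin m) (Fin m) ℝ :=
  Matrix.of fun i j => pdx (fun z => pdx g z j) x i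

/-- Componentwise Laplacian of a vector field. -/
def lapv {n : ℕ} (u : (Fin n → ℝ) → Fin n → ℝ) (x : Fin n → ℝ) : Fin n → ℝ :=
  fun i => lapx (fun z => u z i) x

/-- Squared Euclidean norm of a vector. -/
def norm2 {m : ℕ} (v : Fin m → ℝ) : ℝ := ∑ i, v i ^ 2

/-- Euclidean norm of a vector. -/
def enr {m : ℕ} (v : Fin m → ℝ) : ℝ := Real.sqrt (norm2 v)

/-- Squared Frobenius norm of a matrix, `|E|² = tr (EᵗE)`. -/
def frob2 {n : ℕ} (M : Matrix (Fin n) (Fin n) ℝ) : ℝ := ∑ i, ∑ j, M i j ^ 2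

/-- The 2-plane radial variables `y = (y_1, …, y_N)`, `N = ⌈n/2⌉` (0-indexed):
`y_ℓ = √(x_{2ℓ}² + x_{2ℓ+1}²)` and, when `n` is odd, `y_{N-1} = x_{n-1}`. -/
def yvar {n : ℕ} (x : Fin n → ℝ) (ℓ : Fin ((n+1)/2)) : ℝ :=
  if h : 2 * (ℓ : ℕ) + 1 < n then
    Real.sqrt (x ⟨2*(ℓ:ℕ), by omega⟩ ^ 2 + x ⟨2*(ℓ:ℕ)+1, h⟩ ^ 2)
  else x ⟨n - 1, by have := ℓ.isLt; omega⟩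

/-- The vector of 2-plane radial variables of `x`. -/
def yv {n : ℕ} (x : Fin n → ℝ) : Fin ((n+1)/2) → ℝ := fun ℓ => yvar x ℓ

/-- Inclusion `Fin (n/2) → Fin ((n+1)/2)`, i.e. `d = ⌊n/2⌋` into `N = ⌈n/2⌉`. -/
def dIdx {n : ℕ} (i : Fin (n/2)) : Fin ((n+1)/2) := ⟨(i:ℕ), by have := i.isLt; omega⟩

/-- Partial derivative `∂_ℓ M` of a matrix field on `ℝᴺ`. -/
def pdM {n N : ℕ} (M : (Fin N → ℝ) → Matrix (Fin n) (Fin n) ℝ)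
    (y : Fin N → ℝ) (ℓ : Fin N) : Matrix (Fin n) (Fin n) ℝ :=
  Matrix.of fun i j => pdx (fun z => M z i j) y ℓ

/-- Second partial derivative `∂²_{ℓk} M` of a matrix field on `ℝᴺ`. -/
def pdM2 {n N : ℕ} (M : (Fin N → ℝ) → Matrix (Fin n) (Fin n) ℝ)
    (y : Fin N → ℝ) (ℓ k : Fin N) : Matrix (Fin n) (Fin n) ℝ :=
  Matrix.of fun i j => pdx (fun z => pdM M z ℓ i j) y k

/-- The block diagonal `SO(n)`-valued matrix field `Q[f]`, with `2×2` rotation blocks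
`R[f_ℓ(y)]` (and an extra diagonal `1` when `n` is odd). -/
def Qf {n : ℕ} (f : (Fin ((n+1)/2) → ℝ) → Fin (n/2) → ℝ)
    (y : Fin ((n+1)/2) → ℝ) : Matrix (Fin n) (Fin n) ℝ :=
  Matrix.of fun i j =>
    if h : (i:ℕ)/2 = (j:ℕ)/2 ∧ (i:ℕ)/2 < n/2 then
      (if (i:ℕ) % 2 = 0 then
        (if (j:ℕ) % 2 = 0 then Real.cos (f y ⟨(i:ℕ)/2, h.2⟩)
         else -Real.sin (f y ⟨(i:ℕ)/2, h.2⟩))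
       else
        (if (j:ℕ) % 2 = 0 then Real.sin (f y ⟨(i:ℕ)/2, h.2⟩)
         else Real.cos (f y ⟨(i:ℕ)/2, h.2⟩)))
    else (if i = j then 1 else 0)

/-- The block diagonal rotation matrix `exp(α𝐇) = diag(R[α], …, R[α])`
(an extra diagonal `1` when `n` is odd). -/
def rotM (n : ℕ) (α : ℝ) : Matrix (Fin n) (Fin n) ℝ :=
  Matrix.of fun i j =>
    if (i:ℕ)/2 = (j:ℕ)/2 ∧ (i:ℕ)/2 < n/2 then
      (if (i:ℕ) % 2 = 0 then
        (if (j:ℕ) % 2 = 0 then Real.cos α else -Real.sin α)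
       else
        (if (j:ℕ) % 2 = 0 then Real.sin α else Real.cos α))
    else (if i = j then 1 else 0)

/-- The vector `w^k = (0, …, 0, x_{2k}, x_{2k+1}, 0, …, 0)`. -/
def wv {n : ℕ} (x : Fin n → ℝ) (k : Fin ((n+1)/2)) : Fin n → ℝ :=
  fun j => if (j:ℕ)/2 = (k:ℕ) then x j else 0

/-- The vector `[w^k]^⊥ = (0, …, 0, -x_{2k+1}, x_{2k}, 0, …, 0)` (zero in the odd last slot). -/
def wperp {n : ℕ} (x : Fin n → ℝ) (k : Fin ((n+1)/2)) : Fin n → ℝ :=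
  fun j =>
    if h : (j:ℕ)/2 = (k:ℕ) ∧ 2*(k:ℕ)+1 < n then
      (if (j:ℕ) % 2 = 0 then -x ⟨2*(k:ℕ)+1, h.2⟩ else x ⟨2*(k:ℕ), by omega⟩)
    else 0

/-- The differential operator
`𝓛[u;A,B] = [∇u]ᵗ[∇u]∇A + A [∇u]ᵗΔu + B [∇u]ᵗu`, where `A, B` are evaluated at
`(|x|, |u|², |∇u|²)` and `∇A` is the spatial gradient of `x ↦ A(|x|,|u(x)|²,|∇u(x)|²)`. -/
def LAB {n : ℕ} (A B : ℝ → ℝ → ℝ → ℝ) (u : (Fin n → ℝ) → Fin n → ℝ)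
    (x : Fin n → ℝ) : Fin n → ℝ :=
  ((gradm u x)ᵀ * gradm u x) *ᵥ
      gradx (fun z => A (enr z) (norm2 (u z)) (frob2 (gradm u z))) x
    + A (enr x) (norm2 (u x)) (frob2 (gradm u x)) • ((gradm u x)ᵀ *ᵥ lapv u x)
    + B (enr x) (norm2 (u x)) (frob2 (gradm u x)) • ((gradm u x)ᵀ *ᵥ u x)

/-- The annulus `𝕏ₙ = {x : a < |x| < b}` in `ℝⁿ`. -/
def Xann (n : ℕ) (a b : ℝ) : Set (Fin n → ℝ) := {x | a < enr x ∧ enr x < b}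

/-- The region `𝔸ₙ = {y : a < ‖y‖ < b}` (with the 2-plane radial coordinates positive). -/
def Ann (n : ℕ) (a b : ℝ) : Set (Fin ((n+1)/2) → ℝ) :=
  {y | a < enr y ∧ enr y < b ∧ ∀ ℓ : Fin ((n+1)/2), 2*(ℓ:ℕ)+1 < n → 0 < y ℓ}

/-- `𝒥(y) = y_1 ⋯ y_d`. -/
def Jac (n : ℕ) (y : Fin ((n+1)/2) → ℝ) : ℝ :=
  ∏ ℓ : Fin ((n+1)/2), if 2*(ℓ:ℕ)+1 < n then y ℓ else 1

/-- The argument `ξ = n + Σ_j y_j² |∇f_j|²`. -/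
def xiArg (n : ℕ) (f : (Fin ((n+1)/2) → ℝ) → Fin (n/2) → ℝ)
    (y : Fin ((n+1)/2) → ℝ) : ℝ :=
  (n : ℝ) + ∑ j : Fin (n/2), (y (dIdx j))^2 * norm2 (gradx (fun z => f z j) y)

/-- The coefficients `𝒜_i(y,∇f) = y_i² A(z, z², n + Σ_j y_j²|∇f_j|²) 𝒥(y)`, `z = ‖y‖`. -/
def coefA (n : ℕ) (A : ℝ → ℝ → ℝ → ℝ) (f : (Fin ((n+1)/2) → ℝ) → Fin (n/2) → ℝ)
    (i : Fin (n/2)) (y : Fin ((n+1)/2) → ℝ) : ℝ :=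
  (y (dIdx i))^2 * A (enr y) ((enr y)^2) (xiArg n f y) * Jac n y

/-- `div [𝒜_i(y,∇f) ∇f_i]`, divergence taken in the `y` variables. -/
def divA (n : ℕ) (A : ℝ → ℝ → ℝ → ℝ) (f : (Fin ((n+1)/2) → ℝ) → Fin (n/2) → ℝ)
    (i : Fin (n/2)) (y : Fin ((n+1)/2) → ℝ) : ℝ :=
  ∑ k, pdx (fun z => coefA n A f i z * pdx (fun w => f w i) z k) y k

/-- The curl of a vector field, `[curl U]_{ij} = ∂_j U_i − ∂_i U_j`. -/
def curlm {n : ℕ} (U : (Fin n → ℝ) → Fin n → ℝ) (x : Fin n → ℝ) :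
    Matrix (Fin n) (Fin n) ℝ :=
  Matrix.of fun i j => pdx (fun z => U z i) x j - pdx (fun z => U z j) x i

end
/-!
Write `A_ℓ = ∂_ℓQ(y) x` and `G_ℓ = ∇y_ℓ`. The chain rule gives `∇u = Q + Σ_ℓ A_ℓ ⊗ G_ℓ`, and one
more differentiation expresses the second derivatives of `u` through `∂Q`, `∂²Q`, `∇y` and `∇²y`.
Off the planes `x_{2ℓ} = x_{2ℓ+1} = 0` the gradients `∇y_ℓ` are orthonormal (they are unit vectors
supported on disjoint coordinate blocks), which collapses the double sums: taking the trace of the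
second derivatives gives (i), and (ii) is (i) multiplied by `[∇u]ᵗ`. For (iii), orthonormality and
`QᵗQ = I` give `|∇u|² = n + Σ_ℓ (2⟨A_ℓ, Q G_ℓ⟩ + |A_ℓ|²)` near `x`, which is differentiated directly.
-/

open Filter Topology

section Calculus

variable {m : ℕ} {f g : (Fin m → ℝ) → ℝ} {x : Fin m → ℝ}

theorem pdx_congr_of_eventuallyEq (h : f =ᶠ[𝓝 x] g) : pdx f x = pdx g x := by
  unfold pdx; rw [h.fderiv_eq]

theorem pdx_add (hf : DifferentiableAt ℝ f x) (hg : DifferentiableAt ℝ g x) (j : Fin m) :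
    pdx (fun z => f z + g z) x j = pdx f x j + pdx g x j := by
  simp [pdx, fderiv_fun_add hf hg]

theorem pdx_mul (hf : DifferentiableAt ℝ f x) (hg : DifferentiableAt ℝ g x) (j : Fin m) :
    pdx (fun z => f z * g z) x j = pdx f x j * g x + f x * pdx g x j := by
  simp only [pdx, fderiv_fun_mul hf hg, _root_.add_apply,
    _root_.smul_apply, smul_eq_mul]
  ring

theorem pdx_const_mul (c : ℝ) (hf : DifferentiableAt ℝ f x) (j : Fin m) :
    pdx (fun z => c * f z) x j = c * pdx f x j := by
  simp [pdx, fderiv_const_mul hf]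

theorem pdx_sum {ι : Type*} {s : Finset ι} {F : ι → (Fin m → ℝ) → ℝ}
    (hF : ∀ i ∈ s, DifferentiableAt ℝ (F i) x) (j : Fin m) :
    pdx (fun z => ∑ i ∈ s, F i z) x j = ∑ i ∈ s, pdx (F i) x j := by
  simp [pdx, fderiv_fun_sum hF]

theorem pdx_sqrt (hf : DifferentiableAt ℝ f x) (hx : f x ≠ 0) (j : Fin m) :
    pdx (fun z => √(f z)) x j = pdx f x j / (2 * √(f x)) := by
  simp only [pdx, fderiv_sqrt hf hx, _root_.smul_apply, smul_eq_mul]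
  ring

theorem pdx_const (c : ℝ) (x : Fin m → ℝ) (j : Fin m) : pdx (fun _ => c) x j = 0 := by
  simp [pdx]

theorem pdx_apply (x : Fin m → ℝ) (i j : Fin m) :
    pdx (fun z => z i) x j = (Pi.single j 1 : Fin m → ℝ) i := by
  simp [pdx, fderiv_apply]

theorem pdx_comp {N : ℕ} {g : (Fin N → ℝ) → ℝ} {Y : (Fin m → ℝ) → Fin N → ℝ}
    (hg : DifferentiableAt ℝ g (Y x)) (hY : DifferentiableAt ℝ Y x) (j : Fin m) :
    pdx (fun z => g (Y z)) x j = ∑ ℓ, pdx g (Y x) ℓ * pdx (fun z => Y z ℓ) x j := by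
  have hv : fderiv ℝ Y x (Pi.single j 1) = ∑ ℓ, pdx (fun z => Y z ℓ) x j • Pi.single ℓ 1 := by
    conv_lhs => rw [pi_eq_sum_univ' (fderiv ℝ Y x (Pi.single j 1))]
    simp [pdx, fderiv_apply hY]
  rw [pdx, show (fun z => g (Y z)) = g ∘ Y from rfl, fderiv_comp x hg hY,
    ContinuousLinearMap.comp_apply, hv, map_sum]
  simp [pdx, mul_comm]

end Calculus

noncomputable def pdv {m k : ℕ} (V : (Fin m → ℝ) → Fin k → ℝ) (x : Fin m → ℝ) (j : Fin m) :
    Fin k → ℝ :=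
  fun i => pdx (fun z => V z i) x j

section VectorCalculus

variable {m k : ℕ} {V W : (Fin m → ℝ) → Fin k → ℝ} {x : Fin m → ℝ}

theorem pdv_congr_of_eventuallyEq (h : V =ᶠ[𝓝 x] W) : pdv V x = pdv W x := by
  ext j i
  exact congrFun (pdx_congr_of_eventuallyEq (h.mono fun z hz => congrFun hz i)) j

theorem pdv_add (hV : DifferentiableAt ℝ V x) (hW : DifferentiableAt ℝ W x) (j : Fin m) :
    pdv (fun z => V z + W z) x j = pdv V x j + pdv W x j := by
  ext i
  exact pdx_add (differentiableAt_pi.1 hV i) (differentiableAt_pi.1 hW i) j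

theorem pdv_sum {ι : Type*} {s : Finset ι} {F : ι → (Fin m → ℝ) → Fin k → ℝ}
    (hF : ∀ l ∈ s, DifferentiableAt ℝ (F l) x) (j : Fin m) :
    pdv (fun z => ∑ l ∈ s, F l z) x j = ∑ l ∈ s, pdv (F l) x j := by
  ext i
  simp only [pdv, Finset.sum_apply]
  exact pdx_sum (fun l hl => differentiableAt_pi.1 (hF l hl) i) j

theorem pdv_smul {f : (Fin m → ℝ) → ℝ} (hf : DifferentiableAt ℝ f x)
    (hV : DifferentiableAt ℝ V x) (j : Fin m) :
    pdv (fun z => f z • V z) x j = pdx f x j • V x + f x • pdv V x j := by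
  ext i
  exact pdx_mul hf (differentiableAt_pi.1 hV i) j

theorem pdv_id (x : Fin m → ℝ) (j : Fin m) : pdv (fun z => z) x j = Pi.single j 1 := by
  ext i
  exact pdx_apply x i j

theorem pdv_const (c : Fin k → ℝ) (x : Fin m → ℝ) (j : Fin m) : pdv (fun _ => c) x j = 0 := by
  ext i
  exact pdx_const (c i) x j

theorem differentiableAt_dotProduct (hV : DifferentiableAt ℝ V x)
    (hW : DifferentiableAt ℝ W x) : DifferentiableAt ℝ (fun z => V z ⬝ᵥ W z) x := by
  simp only [dotProduct]
  exact DifferentiableAt.fun_sum fun i _ =>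
    (differentiableAt_pi.1 hV i).fun_mul (differentiableAt_pi.1 hW i)

theorem pdx_dotProduct (hV : DifferentiableAt ℝ V x) (hW : DifferentiableAt ℝ W x) (j : Fin m) :
    pdx (fun z => V z ⬝ᵥ W z) x j = pdv V x j ⬝ᵥ W x + V x ⬝ᵥ pdv W x j := by
  simp only [dotProduct]
  rw [pdx_sum fun i _ => (differentiableAt_pi.1 hV i).fun_mul (differentiableAt_pi.1 hW i),
    ← Finset.sum_add_distrib]
  exact Finset.sum_congr rfl fun i _ =>
    pdx_mul (differentiableAt_pi.1 hV i) (differentiableAt_pi.1 hW i) j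

theorem pdx_dotProduct_self (hV : DifferentiableAt ℝ V x) (j : Fin m) :
    pdx (fun z => V z ⬝ᵥ V z) x j = 2 * (pdv V x j ⬝ᵥ V x) := by
  rw [pdx_dotProduct hV hV, dotProduct_comm (V x)]
  ring

variable {n : ℕ} {M : (Fin m → ℝ) → Matrix (Fin n) (Fin n) ℝ} {U : (Fin m → ℝ) → Fin n → ℝ}

theorem differentiableAt_mulVec (hM : ∀ i l, DifferentiableAt ℝ (fun z => M z i l) x)
    (hU : DifferentiableAt ℝ U x) : DifferentiableAt ℝ (fun z => M z *ᵥ U z) x :=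
  differentiableAt_pi.2 fun i => by
    simp only [mulVec, dotProduct]
    exact DifferentiableAt.fun_sum fun l _ => (hM i l).fun_mul (differentiableAt_pi.1 hU l)

theorem pdv_mulVec (hM : ∀ i l, DifferentiableAt ℝ (fun z => M z i l) x)
    (hU : DifferentiableAt ℝ U x) (j : Fin m) :
    pdv (fun z => M z *ᵥ U z) x j = pdM M x j *ᵥ U x + M x *ᵥ pdv U x j := by
  ext i
  simp only [pdv, mulVec, dotProduct, Pi.add_apply]
  rw [pdx_sum fun l _ => (hM i l).fun_mul (differentiableAt_pi.1 hU l), ← Finset.sum_add_distrib]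
  exact Finset.sum_congr rfl fun l _ => pdx_mul (hM i l) (differentiableAt_pi.1 hU l) j

theorem pdM_comp {N : ℕ} {A : (Fin N → ℝ) → Matrix (Fin n) (Fin n) ℝ}
    {Y : (Fin m → ℝ) → Fin N → ℝ} (hA : ∀ i l, DifferentiableAt ℝ (fun y => A y i l) (Y x))
    (hY : DifferentiableAt ℝ Y x) (j : Fin m) :
    pdM (fun z => A (Y z)) x j = ∑ ℓ, pdx (fun z => Y z ℓ) x j • pdM A (Y x) ℓ := by
  ext i l
  simp only [pdM, of_apply, Matrix.sum_apply, Matrix.smul_apply, smul_eq_mul]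
  rw [pdx_comp (hA i l) hY]
  exact Finset.sum_congr rfl fun ℓ _ => mul_comm _ _

theorem pdv_comp_mulVec {N : ℕ} {A : (Fin N → ℝ) → Matrix (Fin n) (Fin n) ℝ}
    {Y : (Fin m → ℝ) → Fin N → ℝ} (hA : ∀ i l, DifferentiableAt ℝ (fun y => A y i l) (Y x))
    (hY : DifferentiableAt ℝ Y x) (hU : DifferentiableAt ℝ U x) (j : Fin m) :
    pdv (fun z => A (Y z) *ᵥ U z) x j
      = ∑ ℓ, pdx (fun z => Y z ℓ) x j • (pdM A (Y x) ℓ *ᵥ U x) + A (Y x) *ᵥ pdv U x j := by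
  rw [pdv_mulVec (M := fun z => A (Y z)) (fun i l => (hA i l).comp x hY) hU, pdM_comp hA hY,
    sum_mulVec]
  simp only [smul_mulVec]

end VectorCalculus

section RadialVariables

variable {n : ℕ}

def PlanarRadiiPos (x : Fin n → ℝ) : Prop :=
  ∀ ℓ : Fin ((n+1)/2), 2*(ℓ:ℕ)+1 < n → 0 < yvar x ℓ

theorem yvar_eq_sqrt_sum {ℓ : Fin ((n+1)/2)} (hℓ : 2*(ℓ:ℕ)+1 < n) (z : Fin n → ℝ) :
    yvar z ℓ = √(∑ i : Fin n with i.val / 2 = ℓ.val, z i ^ 2) := by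
  rw [yvar, dif_pos hℓ, Finset.sum_filter,
    Fintype.sum_eq_add ⟨2*ℓ, by omega⟩ ⟨2*ℓ+1, hℓ⟩ (by simp [Fin.ext_iff])]
  · rw [if_pos (by simp), if_pos (by simp; omega)]
  · intro i hi
    simp only [Ne, Fin.ext_iff] at hi
    rw [if_neg (by omega)]

theorem yvar_eq_apply {ℓ : Fin ((n+1)/2)} (hℓ : ¬ 2*(ℓ:ℕ)+1 < n) (z : Fin n → ℝ) :
    yvar z ℓ = z ⟨n-1, by omega⟩ := by
  rw [yvar, dif_neg hℓ]

theorem continuous_yvar (ℓ : Fin ((n+1)/2)) : Continuous fun z : Fin n → ℝ => yvar z ℓ := by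
  by_cases hℓ : 2*(ℓ:ℕ)+1 < n
  · simp only [yvar_eq_sqrt_sum hℓ]
    fun_prop
  · simp only [yvar_eq_apply hℓ]
    fun_prop

theorem PlanarRadiiPos.eventually {x : Fin n → ℝ} (hx : PlanarRadiiPos x) :
    ∀ᶠ z in 𝓝 x, PlanarRadiiPos z := by
  refine eventually_all.2 fun ℓ => ?_
  by_cases hℓ : 2*(ℓ:ℕ)+1 < n
  · exact ((continuous_yvar ℓ).continuousAt.eventually (eventually_gt_nhds (hx ℓ hℓ))).mono
      fun z hz _ => hz
  · exact Eventually.of_forall fun z h => absurd h hℓ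

theorem contDiffAt_yvar {z : Fin n → ℝ} (hz : PlanarRadiiPos z) (ℓ : Fin ((n+1)/2)) :
    ContDiffAt ℝ ⊤ (fun w => yvar w ℓ) z := by
  by_cases hℓ : 2*(ℓ:ℕ)+1 < n
  · simp only [yvar_eq_sqrt_sum hℓ]
    refine (Real.contDiffAt_sqrt ?_).comp z (by fun_prop)
    have := hz ℓ hℓ
    rw [yvar_eq_sqrt_sum hℓ] at this
    exact (Real.sqrt_pos.1 this).ne'
  · simp only [yvar_eq_apply hℓ]
    fun_prop

theorem differentiableAt_yv {z : Fin n → ℝ} (hz : PlanarRadiiPos z) :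
    DifferentiableAt ℝ yv z :=
  differentiableAt_pi.2 fun ℓ => (contDiffAt_yvar hz ℓ).differentiableAt (by simp)

theorem differentiableAt_gradx_yvar {z : Fin n → ℝ} (hz : PlanarRadiiPos z)
    (ℓ : Fin ((n+1)/2)) : DifferentiableAt ℝ (gradx fun w => yvar w ℓ) z := by
  have h := ((contDiffAt_yvar hz ℓ).fderiv_right (m := 1) le_top).differentiableAt one_ne_zero
  exact differentiableAt_pi.2 fun j => h.clm_apply (differentiableAt_const _)

theorem gradx_yvar {z : Fin n → ℝ} (hz : PlanarRadiiPos z) (ℓ : Fin ((n+1)/2)) :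
    gradx (fun w => yvar w ℓ) z
      = fun j : Fin n =>
          if (j:ℕ)/2 = ℓ then (if 2*(ℓ:ℕ)+1 < n then z j / yvar z ℓ else 1) else 0 := by
  ext j
  by_cases hℓ : 2*(ℓ:ℕ)+1 < n
  · have hpos := hz ℓ hℓ
    simp only [yvar_eq_sqrt_sum hℓ] at hpos ⊢
    simp only [gradx, if_pos hℓ]
    rw [pdx_sqrt (f := fun w => ∑ i : Fin n with i.val / 2 = ℓ.val, w i ^ 2) (by fun_prop)
      (Real.sqrt_pos.1 hpos).ne', pdx_sum fun i _ => by fun_prop]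
    simp only [sq]
    rw [Finset.sum_congr rfl fun i _ => pdx_mul (differentiableAt_apply i z)
      (differentiableAt_apply i z) j]
    simp only [pdx_apply, Pi.single_apply, boole_mul, mul_boole, Finset.sum_add_distrib,
      Finset.sum_ite_eq', Finset.mem_filter, Finset.mem_univ, true_and]
    split_ifs
    · ring
    · simp
  · simp only [gradx, yvar_eq_apply hℓ, if_neg hℓ, pdx_apply, Pi.single_apply, Fin.ext_iff]
    split_ifs <;> first | rfl | omega

theorem gradx_yvar_dotProduct {z : Fin n → ℝ} (hz : PlanarRadiiPos z) (ℓ k : Fin ((n+1)/2)) :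
    gradx (fun w => yvar w ℓ) z ⬝ᵥ gradx (fun w => yvar w k) z = if ℓ = k then 1 else 0 := by
  rw [gradx_yvar hz, gradx_yvar hz]
  simp only [dotProduct, ite_zero_mul_ite_zero]
  by_cases hlk : ℓ = k
  · subst hlk
    simp only [and_self, ← Finset.sum_filter, if_true]
    by_cases hℓ : 2*(ℓ:ℕ)+1 < n
    · have hy : yvar z ℓ ^ 2 = ∑ i : Fin n with i.val / 2 = ℓ.val, z i ^ 2 := by
        rw [yvar_eq_sqrt_sum hℓ, Real.sq_sqrt (Finset.sum_nonneg fun i _ => sq_nonneg _)]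
      simp only [if_pos hℓ, ← sq, div_pow]
      rw [← Finset.sum_div, ← hy, div_self (pow_pos (hz ℓ hℓ) 2).ne']
    · simp only [if_neg hℓ, mul_one, Finset.sum_filter]
      have hblock : ∀ j : Fin n, (j:ℕ)/2 = ℓ ↔ j = ⟨n-1, by omega⟩ := fun j => by
        simp only [Fin.ext_iff]; omega
      simp [hblock]
  · rw [if_neg hlk]
    exact Finset.sum_eq_zero fun j _ => if_neg fun h => hlk (Fin.ext (h.1.symm.trans h.2))

end RadialVariables

section Algebra

variable {n : ℕ}

theorem sum_smul_mulVec_single (M : Matrix (Fin n) (Fin n) ℝ) (v : Fin n → ℝ) :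
    ∑ j, v j • (M *ᵥ Pi.single j 1) = M *ᵥ v := by
  simp only [← mulVec_smul, ← mulVec_sum, ← pi_eq_sum_univ']

theorem sum_sum_smul_mulVec_single {ι : Type*} [Fintype ι] (G : ι → Fin n → ℝ)
    (M : ι → Matrix (Fin n) (Fin n) ℝ) :
    ∑ j, ∑ ℓ, G ℓ j • (M ℓ *ᵥ Pi.single j 1) = ∑ ℓ, M ℓ *ᵥ G ℓ := by
  rw [Finset.sum_comm]
  simp only [sum_smul_mulVec_single]

theorem sum_smul_sum_smul_of_orthonormal {ι E : Type*} [Fintype ι] [DecidableEq ι]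
    [AddCommMonoid E] [Module ℝ E] {G : ι → Fin n → ℝ}
    (hG : ∀ p q, G p ⬝ᵥ G q = if p = q then 1 else 0) (W : ι → ι → E) :
    ∑ j, ∑ ℓ, G ℓ j • ∑ p, G p j • W ℓ p = ∑ ℓ, W ℓ ℓ := by
  simp only [Finset.smul_sum, smul_smul]
  rw [Finset.sum_comm]
  refine Finset.sum_congr rfl fun ℓ _ => ?_
  rw [Finset.sum_comm]
  simp only [← Finset.sum_smul]
  have hdot : ∀ p, ∑ j, G ℓ j * G p j = G ℓ ⬝ᵥ G p := fun p => rfl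
  simp [hdot, hG]

theorem transpose_add_sum_vecMulVec_mulVec {ι : Type*} [Fintype ι] (M : Matrix (Fin n) (Fin n) ℝ)
    (a g : ι → Fin n → ℝ) (w : Fin n → ℝ) :
    (M + ∑ ℓ, vecMulVec (a ℓ) (g ℓ))ᵀ *ᵥ w = Mᵀ *ᵥ w + ∑ ℓ, (a ℓ ⬝ᵥ w) • g ℓ := by
  simp [transpose_sum, transpose_vecMulVec, add_mulVec, sum_mulVec, vecMulVec_mulVec,
    dotProduct_comm]

theorem frob2_eq_sum_dotProduct (X : Matrix (Fin n) (Fin n) ℝ) : frob2 X = ∑ i, X i ⬝ᵥ X i := by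
  simp only [frob2, dotProduct, sq]

theorem frob2_add_sum_vecMulVec {ι : Type*} [Fintype ι] [DecidableEq ι]
    (M : Matrix (Fin n) (Fin n) ℝ) {a g : ι → Fin n → ℝ}
    (hg : ∀ p q, g p ⬝ᵥ g q = if p = q then 1 else 0) :
    frob2 (M + ∑ ℓ, vecMulVec (a ℓ) (g ℓ))
      = frob2 M + ∑ ℓ, (2 * (a ℓ ⬝ᵥ (M *ᵥ g ℓ)) + a ℓ ⬝ᵥ a ℓ) := by
  have hrow : ∀ i, (M + ∑ ℓ, vecMulVec (a ℓ) (g ℓ)) i = M i + ∑ ℓ, a ℓ i • g ℓ := by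
    intro i; ext j; simp [Matrix.sum_apply, vecMulVec_apply]
  have hMg : ∑ ℓ, a ℓ ⬝ᵥ (M *ᵥ g ℓ) = ∑ i, ∑ ℓ, a ℓ i * (M i ⬝ᵥ g ℓ) := Finset.sum_comm
  have haa : ∑ ℓ, a ℓ ⬝ᵥ a ℓ = ∑ i, ∑ ℓ, a ℓ i * a ℓ i := Finset.sum_comm
  simp only [frob2_eq_sum_dotProduct, hrow, add_dotProduct, dotProduct_add, sum_dotProduct,
    dotProduct_sum, smul_dotProduct, dotProduct_smul, hg, smul_eq_mul, mul_ite, mul_one, mul_zero,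
    Finset.sum_ite_eq', Finset.mem_univ, if_true, dotProduct_comm (g _) (M _), mul_add,
    Finset.sum_add_distrib, ← Finset.mul_sum, hMg, haa]
  ring

theorem frob2_eq_of_transpose_mul_self {M : Matrix (Fin n) (Fin n) ℝ} (h : Mᵀ * M = 1) :
    frob2 M = n := by
  have := congrArg trace h
  simp only [trace, diag, mul_apply, transpose_apply, one_apply_eq, Finset.sum_const,
    Finset.card_univ, Fintype.card_fin, nsmul_eq_mul, mul_one] at this
  rw [frob2, Finset.sum_comm, ← this]
  simp only [sq]

theorem transpose_mul_mulVec_dotProduct (M N : Matrix (Fin n) (Fin n) ℝ) (v w : Fin n → ℝ) :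
    ((Mᵀ * N) *ᵥ v) ⬝ᵥ w = (N *ᵥ v) ⬝ᵥ (M *ᵥ w) := by
  rw [← mulVec_mulVec, mulVec_transpose, ← dotProduct_mulVec]

theorem transpose_mul_mulVec_apply (M N : Matrix (Fin n) (Fin n) ℝ) (v : Fin n → ℝ) (r : Fin n) :
    ((Mᵀ * N) *ᵥ v) r = (M *ᵥ Pi.single r 1) ⬝ᵥ (N *ᵥ v) := by
  rw [dotProduct_comm, ← transpose_mul_mulVec_dotProduct, dotProduct_single, mul_one]

end Algebra

section MapOfRadialVariables

variable {n : ℕ} {Q : (Fin ((n+1)/2) → ℝ) → Matrix (Fin n) (Fin n) ℝ}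

theorem differentiable_pdM (hQ : ∀ i l, ContDiff ℝ 2 fun y => Q y i l) (ℓ : Fin ((n+1)/2))
    (i l : Fin n) : Differentiable ℝ fun y => pdM Q y ℓ i l :=
  (((hQ i l).fderiv_right (m := 1) (by norm_num)).clm_apply contDiff_const).differentiable
    one_ne_zero

theorem pdv_mulVec_yv {M : (Fin ((n+1)/2) → ℝ) → Matrix (Fin n) (Fin n) ℝ}
    (hM : ∀ i l, Differentiable ℝ fun y => M y i l) {z : Fin n → ℝ} (hz : PlanarRadiiPos z)
    (j : Fin n) :
    pdv (fun w => M (yv w) *ᵥ w) z j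
      = ∑ ℓ, gradx (fun w => yvar w ℓ) z j • (pdM M (yv z) ℓ *ᵥ z)
        + M (yv z) *ᵥ Pi.single j 1 := by
  rw [pdv_comp_mulVec (U := fun w => w) (fun i l => (hM i l).differentiableAt)
    (differentiableAt_yv hz) differentiableAt_id, pdv_id]
  rfl

theorem differentiableAt_mulVec_yv {M : (Fin ((n+1)/2) → ℝ) → Matrix (Fin n) (Fin n) ℝ}
    {U : (Fin n → ℝ) → Fin n → ℝ} (hM : ∀ i l, Differentiable ℝ fun y => M y i l)
    {z : Fin n → ℝ} (hz : PlanarRadiiPos z) (hU : DifferentiableAt ℝ U z) :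
    DifferentiableAt ℝ (fun w => M (yv w) *ᵥ U w) z :=
  differentiableAt_mulVec (fun i l => (hM i l).differentiableAt.comp z (differentiableAt_yv hz)) hU

theorem pdv_pdv_mulVec_yv (hQ : ∀ i l, ContDiff ℝ 2 fun y => Q y i l) {x : Fin n → ℝ}
    (hx : PlanarRadiiPos x) (j k : Fin n) :
    pdv (fun z => pdv (fun w => Q (yv w) *ᵥ w) z j) x k
      = ∑ ℓ, (hessx (fun w => yvar w ℓ) x k j • (pdM Q (yv x) ℓ *ᵥ x)
          + gradx (fun w => yvar w ℓ) x j • (∑ p, gradx (fun w => yvar w p) x k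
              • (pdM2 Q (yv x) ℓ p *ᵥ x) + pdM Q (yv x) ℓ *ᵥ Pi.single k 1))
        + ∑ p, gradx (fun w => yvar w p) x k • (pdM Q (yv x) p *ᵥ Pi.single j 1) := by
  have hQ1 : ∀ i l, Differentiable ℝ fun y => Q y i l :=
    fun i l => (hQ i l).differentiable (by norm_num)
  have hG : ∀ ℓ, DifferentiableAt ℝ (fun z => gradx (fun w => yvar w ℓ) z j) x :=
    fun ℓ => differentiableAt_pi.1 (differentiableAt_gradx_yvar hx ℓ) j
  have hA : ∀ ℓ, DifferentiableAt ℝ (fun z => pdM Q (yv z) ℓ *ᵥ z) x :=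
    fun ℓ => differentiableAt_mulVec_yv (differentiable_pdM hQ ℓ) hx differentiableAt_id
  rw [pdv_congr_of_eventuallyEq (hx.eventually.mono fun z hz => pdv_mulVec_yv hQ1 hz j),
    pdv_add (DifferentiableAt.fun_sum fun ℓ _ => (hG ℓ).fun_smul (hA ℓ))
      (differentiableAt_mulVec_yv hQ1 hx (differentiableAt_const _)),
    pdv_sum fun ℓ _ => (hG ℓ).fun_smul (hA ℓ),
    pdv_comp_mulVec (fun i l => (hQ1 i l).differentiableAt) (differentiableAt_yv hx)
      (differentiableAt_const _), pdv_const, mulVec_zero, add_zero]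
  congr 1
  refine Finset.sum_congr rfl fun ℓ _ => ?_
  rw [pdv_smul (hG ℓ) (hA ℓ), pdv_mulVec_yv (differentiable_pdM hQ ℓ) hx]
  rfl

theorem lapv_mulVec_yv (hQ : ∀ i l, ContDiff ℝ 2 fun y => Q y i l) {x : Fin n → ℝ}
    (hx : PlanarRadiiPos x) :
    lapv (fun z => Q (yv z) *ᵥ z) x
      = ∑ ℓ, (pdM2 Q (yv x) ℓ ℓ *ᵥ x + lapx (fun z => yvar z ℓ) x • (pdM Q (yv x) ℓ *ᵥ x)
          + (2:ℝ) • (pdM Q (yv x) ℓ *ᵥ gradx (fun z => yvar z ℓ) x)) := by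
  have hlap : lapv (fun z => Q (yv z) *ᵥ z) x
      = ∑ j, pdv (fun z => pdv (fun w => Q (yv w) *ᵥ w) z j) x j := by
    ext i
    simp only [lapv, lapx, pdv, Finset.sum_apply]
  simp only [hlap, pdv_pdv_mulVec_yv hQ hx, smul_add, Finset.sum_add_distrib,
    sum_sum_smul_mulVec_single, sum_smul_sum_smul_of_orthonormal (gradx_yvar_dotProduct hx)]
  have hlapy : ∀ ℓ, ∑ j, hessx (fun w => yvar w ℓ) x j j = lapx (fun z => yvar z ℓ) x :=
    fun ℓ => rfl
  rw [Finset.sum_comm]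
  simp only [← Finset.sum_smul, hlapy, two_smul, Finset.sum_add_distrib]
  abel

theorem gradm_mulVec_yv (hQ : ∀ i l, Differentiable ℝ fun y => Q y i l) {z : Fin n → ℝ}
    (hz : PlanarRadiiPos z) :
    gradm (fun w => Q (yv w) *ᵥ w) z
      = Q (yv z) + ∑ ℓ, vecMulVec (pdM Q (yv z) ℓ *ᵥ z) (gradx (fun w => yvar w ℓ) z) := by
  ext i j
  have h := congrFun (pdv_mulVec_yv hQ hz j) i
  simp only [pdv, Pi.add_apply, Finset.sum_apply, Pi.smul_apply, smul_eq_mul,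
    mulVec_single_one, col_apply] at h
  simp only [gradm, of_apply, h, Matrix.add_apply, Matrix.sum_apply, vecMulVec_apply, mul_comm,
    add_comm]

theorem frob2_gradm_mulVec_yv (hQ : ∀ i l, Differentiable ℝ fun y => Q y i l)
    (hQO : ∀ y, (Q y)ᵀ * Q y = 1) {z : Fin n → ℝ} (hz : PlanarRadiiPos z) :
    frob2 (gradm (fun w => Q (yv w) *ᵥ w) z)
      = n + ∑ ℓ, (2 * ((pdM Q (yv z) ℓ *ᵥ z) ⬝ᵥ (Q (yv z) *ᵥ gradx (fun w => yvar w ℓ) z))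
          + (pdM Q (yv z) ℓ *ᵥ z) ⬝ᵥ (pdM Q (yv z) ℓ *ᵥ z)) := by
  rw [gradm_mulVec_yv hQ hz, frob2_add_sum_vecMulVec _ (gradx_yvar_dotProduct hz),
    frob2_eq_of_transpose_mul_self (hQO _)]

theorem pdx_frob2_gradm_mulVec_yv (hQ : ∀ i l, ContDiff ℝ 2 fun y => Q y i l)
    (hQO : ∀ y, (Q y)ᵀ * Q y = 1) {x : Fin n → ℝ} (hx : PlanarRadiiPos x) (r : Fin n) :
    pdx (fun z => frob2 (gradm (fun w => Q (yv w) *ᵥ w) z)) x r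
      = ∑ ℓ, (2 * (pdv (fun z => pdM Q (yv z) ℓ *ᵥ z) x r
              ⬝ᵥ (Q (yv x) *ᵥ gradx (fun w => yvar w ℓ) x)
            + (pdM Q (yv x) ℓ *ᵥ x)
              ⬝ᵥ pdv (fun z => Q (yv z) *ᵥ gradx (fun w => yvar w ℓ) z) x r)
          + 2 * (pdv (fun z => pdM Q (yv z) ℓ *ᵥ z) x r ⬝ᵥ (pdM Q (yv x) ℓ *ᵥ x))) := by
  have hQ1 : ∀ i l, Differentiable ℝ fun y => Q y i l :=
    fun i l => (hQ i l).differentiable (by norm_num)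
  have hA : ∀ ℓ, DifferentiableAt ℝ (fun z => pdM Q (yv z) ℓ *ᵥ z) x :=
    fun ℓ => differentiableAt_mulVec_yv (differentiable_pdM hQ ℓ) hx differentiableAt_id
  have hB : ∀ ℓ, DifferentiableAt ℝ (fun z => Q (yv z) *ᵥ gradx (fun w => yvar w ℓ) z) x :=
    fun ℓ => differentiableAt_mulVec_yv hQ1 hx (differentiableAt_gradx_yvar hx ℓ)
  have hAB := fun ℓ => differentiableAt_dotProduct (hA ℓ) (hB ℓ)
  have hAA := fun ℓ => differentiableAt_dotProduct (hA ℓ) (hA ℓ)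
  rw [pdx_congr_of_eventuallyEq (hx.eventually.mono fun z hz =>
      frob2_gradm_mulVec_yv hQ1 hQO hz),
    pdx_add (differentiableAt_const _) (DifferentiableAt.fun_sum fun ℓ _ =>
      ((hAB ℓ).const_mul 2).fun_add (hAA ℓ)), pdx_const, zero_add,
    pdx_sum fun ℓ _ => ((hAB ℓ).const_mul 2).fun_add (hAA ℓ)]
  refine Finset.sum_congr rfl fun ℓ _ => ?_
  rw [pdx_add ((hAB ℓ).const_mul 2) (hAA ℓ), pdx_const_mul _ (hAB ℓ),
    pdx_dotProduct (hA ℓ) (hB ℓ), pdx_dotProduct_self (hA ℓ)]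

theorem gradx_frob2_gradm_mulVec_yv (hQ : ∀ i l, ContDiff ℝ 2 fun y => Q y i l)
    (hQO : ∀ y, (Q y)ᵀ * Q y = 1) {x : Fin n → ℝ} (hx : PlanarRadiiPos x) :
    gradx (fun z => frob2 (gradm (fun w => Q (yv w) *ᵥ w) z)) x
      = (2:ℝ) • (∑ ℓ, (((pdM Q (yv x) ℓ)ᵀ * Q (yv x)) *ᵥ gradx (fun z => yvar z ℓ) x
            + hessx (fun z => yvar z ℓ) x *ᵥ (((Q (yv x))ᵀ * pdM Q (yv x) ℓ) *ᵥ x)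
            + ((pdM Q (yv x) ℓ)ᵀ * pdM Q (yv x) ℓ) *ᵥ x))
        + ∑ ℓ, ∑ k, (2 * (((((pdM Q (yv x) k)ᵀ * pdM Q (yv x) ℓ
              + (Q (yv x))ᵀ * pdM2 Q (yv x) ℓ k) *ᵥ x) ⬝ᵥ gradx (fun z => yvar z ℓ) x)
            + ((pdM2 Q (yv x) ℓ k *ᵥ x) ⬝ᵥ (pdM Q (yv x) ℓ *ᵥ x))))
          • gradx (fun z => yvar z k) x := by
  ext r
  have hhess : ∀ ℓ v, (hessx (fun z => yvar z ℓ) x *ᵥ v) r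
      = v ⬝ᵥ pdv (gradx fun w => yvar w ℓ) x r := fun ℓ v => dotProduct_comm _ _
  have hP2 : ∀ ℓ p, pdM (fun y => pdM Q y ℓ) (yv x) p = pdM2 Q (yv x) ℓ p := fun _ _ => rfl
  have hy : ∀ p, pdx (fun z => yv z p) x r = gradx (fun z => yvar z p) x r := fun _ => rfl
  rw [gradx, pdx_frob2_gradm_mulVec_yv hQ hQO hx r]
  simp only [pdv_mulVec_yv (differentiable_pdM hQ _) hx,
    pdv_comp_mulVec (fun i l => ((hQ i l).differentiable (by norm_num)).differentiableAt)
      (differentiableAt_yv hx) (differentiableAt_gradx_yvar hx _),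
    Pi.add_apply, Pi.smul_apply, Finset.sum_apply, smul_eq_mul, hhess, hP2, hy,
    transpose_mul_mulVec_apply, transpose_mul_mulVec_dotProduct, add_mulVec, add_dotProduct,
    sum_dotProduct, dotProduct_sum, smul_dotProduct, dotProduct_smul, dotProduct_add, mul_add,
    add_mul, Finset.mul_sum, Finset.sum_add_distrib]
  simp only [mul_comm, mul_left_comm, mul_assoc]
  ring

end MapOfRadialVariables

theorem stmt5_general (n : ℕ)
    (Q : (Fin ((n+1)/2) → ℝ) → Matrix (Fin n) (Fin n) ℝ)
    (hQreg : ∀ i j, ContDiff ℝ 2 fun y => Q y i j)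
    (hQSO : ∀ y, (Q y)ᵀ * Q y = 1 ∧ (Q y).det = 1)
    (u : (Fin n → ℝ) → Fin n → ℝ)
    (hu : ∀ z, u z = Q (yv z) *ᵥ z)
    (x : Fin n → ℝ)
    (hx : ∀ ℓ : Fin ((n+1)/2), 2*(ℓ:ℕ)+1 < n → 0 < yvar x ℓ) :
    let y0 := yv x
    let gy : Fin ((n+1)/2) → Fin n → ℝ := fun ℓ => gradx (fun z => yvar z ℓ) x
    let ly : Fin ((n+1)/2) → ℝ := fun ℓ => lapx (fun z => yvar z ℓ) x
    -- (i)
    (lapv u x = ∑ ℓ, (pdM2 Q y0 ℓ ℓ *ᵥ x + ly ℓ • (pdM Q y0 ℓ *ᵥ x)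
        + (2:ℝ) • (pdM Q y0 ℓ *ᵥ gy ℓ))) ∧
    -- (ii)
    ((gradm u x)ᵀ *ᵥ lapv u x
      = (∑ ℓ, (((Q y0)ᵀ * pdM2 Q y0 ℓ ℓ) *ᵥ x + ly ℓ • (((Q y0)ᵀ * pdM Q y0 ℓ) *ᵥ x)
            + (2:ℝ) • (((Q y0)ᵀ * pdM Q y0 ℓ) *ᵥ gy ℓ)))
        + ∑ ℓ, ∑ k, (((pdM Q y0 ℓ *ᵥ x) ⬝ᵥ (pdM2 Q y0 k k *ᵥ x))
            + ly k * ((pdM Q y0 ℓ *ᵥ x) ⬝ᵥ (pdM Q y0 k *ᵥ x))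
            + 2 * ((pdM Q y0 ℓ *ᵥ x) ⬝ᵥ (pdM Q y0 k *ᵥ gy k))) • gy ℓ) ∧
    -- (iii)
    (gradx (fun z => frob2 (gradm u z)) x
      = (2:ℝ) • (∑ ℓ, (((pdM Q y0 ℓ)ᵀ * Q y0) *ᵥ gy ℓ
            + hessx (fun z => yvar z ℓ) x *ᵥ (((Q y0)ᵀ * pdM Q y0 ℓ) *ᵥ x)
            + ((pdM Q y0 ℓ)ᵀ * pdM Q y0 ℓ) *ᵥ x))
        + ∑ ℓ, ∑ k, (2 * (((((pdM Q y0 k)ᵀ * pdM Q y0 ℓ + (Q y0)ᵀ * pdM2 Q y0 ℓ k) *ᵥ x) ⬝ᵥ gy ℓ)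
            + ((pdM2 Q y0 ℓ k *ᵥ x) ⬝ᵥ (pdM Q y0 ℓ *ᵥ x)))) • gy k) := by
  intro y0 gy ly
  obtain rfl : u = fun z => Q (yv z) *ᵥ z := funext hu
  have hlap := lapv_mulVec_yv hQreg hx
  refine ⟨hlap, ?_, gradx_frob2_gradm_mulVec_yv hQreg (fun y => (hQSO y).1) hx⟩
  rw [hlap, gradm_mulVec_yv (fun i l => (hQreg i l).differentiable (by norm_num)) hx,
    transpose_add_sum_vecMulVec_mulVec]
  simp only [mulVec_sum, mulVec_add, mulVec_smul, mulVec_mulVec, dotProduct_sum,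
    dotProduct_add, dotProduct_smul, smul_eq_mul, Finset.sum_smul]
  rfl

/-- Lemma 3.8: second-order identities for a map `u(x) = Q(y(x)) x`
with `Q` an `SO(n)`-valued `C²` matrix field of the 2-plane radial variables. -/
theorem stmt5 (n : ℕ) (hn : 2 ≤ n)
    (Q : (Fin ((n+1)/2) → ℝ) → Matrix (Fin n) (Fin n) ℝ)
    (hQreg : ∀ i j, ContDiff ℝ 2 fun y => Q y i j)
    (hQSO : ∀ y, (Q y)ᵀ * Q y = 1 ∧ (Q y).det = 1)
    (u : (Fin n → ℝ) → Fin n → ℝ)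
    (hu : ∀ z, u z = Q (yv z) *ᵥ z)
    (x : Fin n → ℝ)
    (hx : ∀ ℓ : Fin ((n+1)/2), 2*(ℓ:ℕ)+1 < n → 0 < yvar x ℓ) :
    let y0 := yv x
    let gy : Fin ((n+1)/2) → Fin n → ℝ := fun ℓ => gradx (fun z => yvar z ℓ) x
    let ly : Fin ((n+1)/2) → ℝ := fun ℓ => lapx (fun z => yvar z ℓ) x
    -- (i)
    (lapv u x = ∑ ℓ, (pdM2 Q y0 ℓ ℓ *ᵥ x + ly ℓ • (pdM Q y0 ℓ *ᵥ x)
        + (2:ℝ) • (pdM Q y0 ℓ *ᵥ gy ℓ))) ∧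
    -- (ii)
    ((gradm u x)ᵀ *ᵥ lapv u x
      = (∑ ℓ, (((Q y0)ᵀ * pdM2 Q y0 ℓ ℓ) *ᵥ x + ly ℓ • (((Q y0)ᵀ * pdM Q y0 ℓ) *ᵥ x)
            + (2:ℝ) • (((Q y0)ᵀ * pdM Q y0 ℓ) *ᵥ gy ℓ)))
        + ∑ ℓ, ∑ k, (((pdM Q y0 ℓ *ᵥ x) ⬝ᵥ (pdM2 Q y0 k k *ᵥ x))
            + ly k * ((pdM Q y0 ℓ *ᵥ x) ⬝ᵥ (pdM Q y0 k *ᵥ x))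
            + 2 * ((pdM Q y0 ℓ *ᵥ x) ⬝ᵥ (pdM Q y0 k *ᵥ gy k))) • gy ℓ) ∧
    -- (iii)
    (gradx (fun z => frob2 (gradm u z)) x
      = (2:ℝ) • (∑ ℓ, (((pdM Q y0 ℓ)ᵀ * Q y0) *ᵥ gy ℓ
            + hessx (fun z => yvar z ℓ) x *ᵥ (((Q y0)ᵀ * pdM Q y0 ℓ) *ᵥ x)
            + ((pdM Q y0 ℓ)ᵀ * pdM Q y0 ℓ) *ᵥ x))
        + ∑ ℓ, ∑ k, (2 * (((((pdM Q y0 k)ᵀ * pdM Q y0 ℓ + (Q y0)ᵀ * pdM2 Q y0 ℓ k) *ᵥ x) ⬝ᵥ gy ℓ)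
            + ((pdM2 Q y0 ℓ k *ᵥ x) ⬝ᵥ (pdM Q y0 ℓ *ᵥ x)))) • gy k) :=
  stmt5_general n Q hQreg hQSO u hu x hx
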